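/- Let f : [−c, c] → {1,0,−1} satisfy: for all x,y,z ∈ [−c,c] with x+y+z = 0 the multiset {f(x),f(y),f(z)} is consistent. Then for all x, y ∈ [−c, c] with x, y > 0 and x/y ∈ ℚ, we have f(x) = f(y). -/

import Mathlib

def Consistent (x y z : ℤ) : Prop :=
  ({x, y, z} : Multiset ℤ) = {1, 1, -1} ∨
  ({x, y, z} : Multiset ℤ) = {1, 0, -1} ∨
  ({x, y, z} : Multiset ℤ) = {1, -1, -1} ∨
  ({x, y, z} : Multiset ℤ) = {0, 0, 0}

/-!
Normalising by `f 0 = 0` and `f (-u) = -f u`, consistency of `(n δ, δ, -(n + 1) δ)` forces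
`f ((n + 1) δ) = f (n δ)`, so `f` is constant on the positive multiples of any `δ > 0` inside
`[-c, c]`. If `x / y = p / q`, then `x` and `y` are both multiples of `δ = y / q`.
-/

namespace Consistent

variable {a b : ℤ}

lemma mem_range {x y z : ℤ} (h : Consistent x y z) :
    (x = 1 ∨ x = 0 ∨ x = -1) ∧ (y = 1 ∨ y = 0 ∨ y = -1) ∧ (z = 1 ∨ z = 0 ∨ z = -1) := by
  have hmem : ∀ w ∈ ({x, y, z} : Multiset ℤ), w = 1 ∨ w = 0 ∨ w = -1 := by
    rcases h with h | h | h | h <;> rw [h] <;> simp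
  exact ⟨hmem x (by simp), hmem y (by simp), hmem z (by simp)⟩

lemma eq_zero_of_self (h : Consistent a a a) : a = 0 := by
  obtain ⟨ha, -, -⟩ := h.mem_range
  rcases ha with rfl | rfl | rfl <;> revert h <;> unfold Consistent <;> decide

lemma eq_neg_of_zero (h : Consistent a b 0) : b = -a := by
  obtain ⟨ha, hb, -⟩ := h.mem_range
  rcases ha with rfl | rfl | rfl <;> rcases hb with rfl | rfl | rfl <;> revert h <;> unfold Consistent <;> decide

lemma eq_of_neg (h : Consistent a a (-b)) : b = a := by
  obtain ⟨ha, -, hb⟩ := h.mem_range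
  have hb' : b = -1 ∨ b = 0 ∨ b = 1 := by omega
  rcases ha with rfl | rfl | rfl <;> rcases hb' with rfl | rfl | rfl <;> revert h <;> unfold Consistent <;> decide

end Consistent

def ConsistentOn (c : ℝ) (f : ℝ → ℤ) : Prop :=
  ∀ x ∈ Set.Icc (-c) c, ∀ y ∈ Set.Icc (-c) c, ∀ z ∈ Set.Icc (-c) c,
    x + y + z = 0 → Consistent (f x) (f y) (f z)

namespace ConsistentOn

variable {c : ℝ} {f : ℝ → ℤ}

lemma map_zero (hf : ConsistentOn c f) (hc : 0 ≤ c) : f 0 = 0 :=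
  have h0 : (0 : ℝ) ∈ Set.Icc (-c) c := ⟨by linarith, hc⟩
  (hf 0 h0 0 h0 0 h0 (by ring)).eq_zero_of_self

lemma map_neg (hf : ConsistentOn c f) {u : ℝ} (hu : u ∈ Set.Icc (-c) c) : f (-u) = -f u := by
  have hc : 0 ≤ c := by linarith [hu.1, hu.2]
  have h := hf u hu (-u) ⟨by linarith [hu.2], by linarith [hu.1]⟩ 0 ⟨by linarith, hc⟩ (by ring)
  rw [hf.map_zero hc] at h
  exact h.eq_neg_of_zero

lemma map_nat_mul (hf : ConsistentOn c f) {δ : ℝ} (hδ : 0 ≤ δ) {n : ℕ} (hn : 1 ≤ n)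
    (hnc : n * δ ≤ c) : f (n * δ) = f δ := by
  induction n, hn using Nat.le_induction with
  | base => simp
  | succ n hn ih =>
    push_cast at hnc ⊢
    have hn' : (1 : ℝ) ≤ n := by exact_mod_cast hn
    have hnδ : (n : ℝ) * δ ∈ Set.Icc (-c) c := ⟨by nlinarith, by nlinarith⟩
    have hδc : δ ∈ Set.Icc (-c) c := ⟨by nlinarith, by nlinarith⟩
    have hsucc : ((n : ℝ) + 1) * δ ∈ Set.Icc (-c) c := ⟨by nlinarith, hnc⟩
    have h := hf _ hnδ _ hδc (-(((n : ℝ) + 1) * δ))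
      ⟨by linarith [hsucc.2], by linarith [hsucc.1]⟩ (by ring)
    rw [hf.map_neg hsucc, ih hnδ.2] at h
    exact h.eq_of_neg

end ConsistentOn

lemma exists_nat_mul_eq_of_div_eq_rat {x y : ℝ} (hx : 0 < x) (hy : 0 < y) {q : ℚ}
    (hq : (q : ℝ) = x / y) :
    ∃ δ > 0, ∃ m n : ℕ, 1 ≤ m ∧ 1 ≤ n ∧ x = m * δ ∧ y = n * δ := by
  have hden : (0 : ℝ) < q.den := by exact_mod_cast q.pos
  have hnum_pos : 0 < q.num :=
    Rat.num_pos.mpr (by exact_mod_cast (hq ▸ div_pos hx hy : (0 : ℝ) < q))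
  have hnum : ((q.num.toNat : ℕ) : ℝ) = q.num := by
    exact_mod_cast Int.toNat_of_nonneg hnum_pos.le
  refine ⟨y / q.den, div_pos hy hden, q.num.toNat, q.den, by omega, q.pos, ?_, by field_simp⟩
  rw [hnum, ← mul_div_assoc, mul_comm, mul_div_assoc, ← Rat.cast_def, hq,
    mul_div_cancel₀ _ hy.ne']

theorem stmt18_general (c : ℝ) (f : ℝ → ℤ)
    (hcons : ∀ x ∈ Set.Icc (-c) c, ∀ y ∈ Set.Icc (-c) c, ∀ z ∈ Set.Icc (-c) c,
      x + y + z = 0 → Consistent (f x) (f y) (f z)) :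
    ∀ x ∈ Set.Icc (-c) c, ∀ y ∈ Set.Icc (-c) c,
      0 < x → 0 < y → (∃ q : ℚ, (q : ℝ) = x / y) → f x = f y := by
  rintro x hx y hy hx_pos hy_pos ⟨q, hq⟩
  have hf : ConsistentOn c f := hcons
  obtain ⟨δ, hδ, m, n, hm, hn, rfl, rfl⟩ := exists_nat_mul_eq_of_div_eq_rat hx_pos hy_pos hq
  rw [hf.map_nat_mul hδ.le hm hx.2, hf.map_nat_mul hδ.le hn hy.2]

theorem stmt18 (c : ℝ) (f : ℝ → ℤ)
    (hrange : ∀ x ∈ Set.Icc (-c) c, f x = 1 ∨ f x = 0 ∨ f x = -1)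
    (hcons : ∀ x ∈ Set.Icc (-c) c, ∀ y ∈ Set.Icc (-c) c, ∀ z ∈ Set.Icc (-c) c,
      x + y + z = 0 → Consistent (f x) (f y) (f z)) :
    ∀ x ∈ Set.Icc (-c) c, ∀ y ∈ Set.Icc (-c) c,
      0 < x → 0 < y → (∃ q : ℚ, (q : ℝ) = x / y) → f x = f y :=
  stmt18_general c f hcons
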